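/- In one space dimension, if (ρ,u) is a classical solution of the pressureless Navier–Stokes system ∂_t ρ + ∂_x(ρu) = 0, ∂_t(ρu) + ∂_x(ρu²) − ∂_x(μ(ρ)∂_x u) = 0 with ρ > 0 and μ smooth, then w := u + (μ(ρ)/ρ²)∂_x ρ · 1 satisfies ∂_t(ρw) + ∂_x(ρwu) = 0, provided P is defined so that ∂_x P(ρ) = (μ(ρ)/ρ²)∂_x ρ with P'(r) = μ(r)/r², and w = u + ∂_x P(ρ). -/

import Mathlib

/-!
Write `φ = P(ρ)` and `D f = ∂ₜ f + u ∂ₓ f` for the material derivative. The continuity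
equation gives `∂ₜ (ρ f) + ∂ₓ (ρ f u) = ρ D f` for every `f`, so it suffices to show
`ρ D u + ρ D (∂ₓ φ) = 0`. The momentum equation says `ρ D u = ∂ₓ σ` with `σ = μ(ρ) ∂ₓ u`.
On the other hand, by the chain rule and the continuity equation,
`D φ = P'(ρ) D ρ = -P'(ρ) ρ ∂ₓ u = -σ / ρ`, and differentiating in `x`
(using `∂ₓ D φ = D ∂ₓ φ + ∂ₓ u ∂ₓ φ`) gives `ρ D (∂ₓ φ) = -∂ₓ σ`.
-/

open Set Function

noncomputable def partialFst (f : ℝ → ℝ → ℝ) (t x : ℝ) : ℝ := deriv (fun s => f s x) t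

noncomputable def partialSnd (f : ℝ → ℝ → ℝ) (t x : ℝ) : ℝ := deriv (fun y => f t y) x

noncomputable def materialDeriv (u f : ℝ → ℝ → ℝ) (t x : ℝ) : ℝ :=
  partialFst f t x + u t x * partialSnd f t x

section Partial

variable {f : ℝ → ℝ → ℝ} {t x : ℝ}

theorem hasDerivAt_fst_slice (hf : DifferentiableAt ℝ (uncurry f) (t, x)) :
    HasDerivAt (fun s => f s x) (fderiv ℝ (uncurry f) (t, x) (1, 0)) t := by
  have h := hf.hasFDerivAt.comp_hasDerivAt t ((hasDerivAt_id t).prodMk (hasDerivAt_const t x))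
  exact h

theorem hasDerivAt_snd_slice (hf : DifferentiableAt ℝ (uncurry f) (t, x)) :
    HasDerivAt (fun y => f t y) (fderiv ℝ (uncurry f) (t, x) (0, 1)) x := by
  have h := hf.hasFDerivAt.comp_hasDerivAt x ((hasDerivAt_const x t).prodMk (hasDerivAt_id x))
  exact h

theorem DifferentiableAt.hasDerivAt_partialFst (hf : DifferentiableAt ℝ (uncurry f) (t, x)) :
    HasDerivAt (fun s => f s x) (partialFst f t x) t :=
  (hasDerivAt_fst_slice hf).differentiableAt.hasDerivAt

theorem DifferentiableAt.hasDerivAt_partialSnd (hf : DifferentiableAt ℝ (uncurry f) (t, x)) :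
    HasDerivAt (fun y => f t y) (partialSnd f t x) x :=
  (hasDerivAt_snd_slice hf).differentiableAt.hasDerivAt

theorem uncurry_partialFst (hf : Differentiable ℝ (uncurry f)) :
    uncurry (partialFst f) = fun q => fderiv ℝ (uncurry f) q (1, 0) :=
  funext fun q => (hasDerivAt_fst_slice (hf q)).deriv

theorem uncurry_partialSnd (hf : Differentiable ℝ (uncurry f)) :
    uncurry (partialSnd f) = fun q => fderiv ℝ (uncurry f) q (0, 1) :=
  funext fun q => (hasDerivAt_snd_slice (hf q)).deriv

variable {m n : WithTop ℕ∞}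

theorem ContDiff.uncurry_partialFst (hf : ContDiff ℝ n (uncurry f)) (hmn : m + 1 ≤ n) :
    ContDiff ℝ m (uncurry (partialFst f)) := by
  rw [_root_.uncurry_partialFst (hf.differentiable fun h => by simp [h] at hmn)]
  exact (hf.fderiv_right hmn).clm_apply contDiff_const

theorem ContDiff.uncurry_partialSnd (hf : ContDiff ℝ n (uncurry f)) (hmn : m + 1 ≤ n) :
    ContDiff ℝ m (uncurry (partialSnd f)) := by
  rw [_root_.uncurry_partialSnd (hf.differentiable fun h => by simp [h] at hmn)]
  exact (hf.fderiv_right hmn).clm_apply contDiff_const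

theorem partialFst_partialSnd (hf : ContDiff ℝ 2 (uncurry f)) :
    partialFst (partialSnd f) t x = partialSnd (partialFst f) t x := by
  have hf' : Differentiable ℝ (uncurry f) := hf.differentiable (by norm_num)
  have hd : DifferentiableAt ℝ (fderiv ℝ (uncurry f)) (t, x) :=
    ((hf.fderiv_right (m := 1) (by norm_num)).differentiable one_ne_zero).differentiableAt
  have hcomp : ∀ v w : ℝ × ℝ,
      fderiv ℝ (fun q => fderiv ℝ (uncurry f) q v) (t, x) w
        = fderiv ℝ (fderiv ℝ (uncurry f)) (t, x) w v := fun v w => by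
    rw [fderiv_clm_apply hd (differentiableAt_const v)]
    simp
  have hsymm : IsSymmSndFDerivAt ℝ (uncurry f) (t, x) :=
    hf.contDiffAt.isSymmSndFDerivAt (by simp)
  show deriv (fun s => partialSnd f s x) t = deriv (fun y => partialFst f t y) x
  rw [(hasDerivAt_fst_slice ((hf.uncurry_partialSnd (m := 1) (by norm_num)).differentiable
      one_ne_zero _)).deriv, (hasDerivAt_snd_slice ((hf.uncurry_partialFst (m := 1)
      (by norm_num)).differentiable one_ne_zero _)).deriv,
    _root_.uncurry_partialSnd hf', _root_.uncurry_partialFst hf', hcomp, hcomp, hsymm.eq]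

end Partial

section Transport

variable {ρ u f : ℝ → ℝ → ℝ} {t x : ℝ}

theorem materialDeriv_add {g : ℝ → ℝ → ℝ} (hf : DifferentiableAt ℝ (uncurry f) (t, x))
    (hg : DifferentiableAt ℝ (uncurry g) (t, x)) :
    materialDeriv u (fun s y => f s y + g s y) t x
      = materialDeriv u f t x + materialDeriv u g t x := by
  have ht : partialFst (fun s y => f s y + g s y) t x = partialFst f t x + partialFst g t x :=
    (hf.hasDerivAt_partialFst.fun_add hg.hasDerivAt_partialFst).deriv
  have hx : partialSnd (fun s y => f s y + g s y) t x = partialSnd f t x + partialSnd g t x :=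
    (hf.hasDerivAt_partialSnd.fun_add hg.hasDerivAt_partialSnd).deriv
  rw [materialDeriv, ht, hx, materialDeriv, materialDeriv]
  ring

theorem materialDeriv_comp {P : ℝ → ℝ} {p : ℝ} (hP : HasDerivAt P p (ρ t x))
    (hρ : DifferentiableAt ℝ (uncurry ρ) (t, x)) :
    materialDeriv u (fun s y => P (ρ s y)) t x = p * materialDeriv u ρ t x := by
  have ht : partialFst (fun s y => P (ρ s y)) t x = p * partialFst ρ t x :=
    (hP.comp t hρ.hasDerivAt_partialFst).deriv
  have hx : partialSnd (fun s y => P (ρ s y)) t x = p * partialSnd ρ t x :=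
    (hP.comp x hρ.hasDerivAt_partialSnd).deriv
  rw [materialDeriv, ht, hx, materialDeriv]
  ring

theorem materialDeriv_of_mass (hρ : DifferentiableAt ℝ (uncurry ρ) (t, x))
    (hu : DifferentiableAt ℝ (uncurry u) (t, x))
    (mass : partialFst ρ t x + partialSnd (fun s y => ρ s y * u s y) t x = 0) :
    materialDeriv u ρ t x = -(ρ t x * partialSnd u t x) := by
  rw [partialSnd, (hρ.hasDerivAt_partialSnd.fun_mul hu.hasDerivAt_partialSnd).deriv] at mass
  rw [materialDeriv]
  linarith

theorem partialFst_mul_add_partialSnd_mul_mul (hρ : DifferentiableAt ℝ (uncurry ρ) (t, x))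
    (hu : DifferentiableAt ℝ (uncurry u) (t, x)) (hf : DifferentiableAt ℝ (uncurry f) (t, x))
    (mass : partialFst ρ t x + partialSnd (fun s y => ρ s y * u s y) t x = 0) :
    partialFst (fun s y => ρ s y * f s y) t x + partialSnd (fun s y => ρ s y * f s y * u s y) t x
      = ρ t x * materialDeriv u f t x := by
  have ht : partialFst (fun s y => ρ s y * f s y) t x
      = partialFst ρ t x * f t x + ρ t x * partialFst f t x :=
    (hρ.hasDerivAt_partialFst.fun_mul hf.hasDerivAt_partialFst).deriv
  have hx : partialSnd (fun s y => ρ s y * f s y * u s y) t x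
      = (partialSnd ρ t x * f t x + ρ t x * partialSnd f t x) * u t x
        + ρ t x * f t x * partialSnd u t x :=
    ((hρ.hasDerivAt_partialSnd.fun_mul hf.hasDerivAt_partialSnd).fun_mul
      hu.hasDerivAt_partialSnd).deriv
  have hρD := materialDeriv_of_mass hρ hu mass
  rw [materialDeriv] at hρD ⊢
  rw [ht, hx]
  linear_combination f t x * hρD

theorem partialSnd_materialDeriv (hf : ContDiff ℝ 2 (uncurry f))
    (hu : DifferentiableAt ℝ (uncurry u) (t, x)) :
    partialSnd (materialDeriv u f) t x
      = materialDeriv u (partialSnd f) t x + partialSnd u t x * partialSnd f t x := by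
  have hft := ((hf.uncurry_partialFst (m := 1) (by norm_num)).differentiable one_ne_zero
    (t, x)).hasDerivAt_partialSnd
  have hfx := ((hf.uncurry_partialSnd (m := 1) (by norm_num)).differentiable one_ne_zero
    (t, x)).hasDerivAt_partialSnd
  show deriv (fun y => partialFst f t y + u t y * partialSnd f t y) x = _
  rw [(hft.fun_add (hu.hasDerivAt_partialSnd.fun_mul hfx)).deriv, materialDeriv,
    partialFst_partialSnd hf]
  ring

end Transport

theorem contDiffOn_succ_of_hasDerivAt {g P : ℝ → ℝ} {s : Set ℝ} {n : ℕ} (hs : IsOpen s)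
    (hg : ContDiffOn ℝ n g s) (hP : ∀ r ∈ s, HasDerivAt P (g r) r) :
    ContDiffOn ℝ (n + 1) P s := by
  rw [contDiffOn_succ_iff_deriv_of_isOpen hs]
  exact ⟨fun r hr => (hP r hr).differentiableAt.differentiableWithinAt, by simp,
    hg.congr fun r hr => (hP r hr).deriv⟩

section Offset

variable {ρ u : ℝ → ℝ → ℝ} {μ P : ℝ → ℝ} {t x : ℝ}

theorem contDiff_uncurry_comp (hρ : ContDiff ℝ 2 (uncurry ρ)) (hρpos : ∀ t x, 0 < ρ t x)
    (hμ : ContDiffOn ℝ 1 μ (Ioi 0)) (hP : ∀ r ∈ Ioi (0 : ℝ), HasDerivAt P (μ r / r ^ 2) r) :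
    ContDiff ℝ 2 (uncurry fun s y => P (ρ s y)) := by
  have hP2 : ContDiffOn ℝ 2 P (Ioi 0) := contDiffOn_succ_of_hasDerivAt (n := 1) isOpen_Ioi
    (hμ.div (contDiffOn_id.pow 2) fun _ hr => pow_ne_zero 2 (ne_of_gt hr)) hP
  exact hP2.comp_contDiff hρ fun q => hρpos q.1 q.2

theorem mul_materialDeriv_of_momentum {σ : ℝ → ℝ → ℝ}
    (hρ : DifferentiableAt ℝ (uncurry ρ) (t, x)) (hu : DifferentiableAt ℝ (uncurry u) (t, x))
    (mass : partialFst ρ t x + partialSnd (fun s y => ρ s y * u s y) t x = 0)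
    (mom : partialFst (fun s y => ρ s y * u s y) t x
      + partialSnd (fun s y => ρ s y * u s y ^ 2) t x - partialSnd σ t x = 0) :
    ρ t x * materialDeriv u u t x = partialSnd σ t x := by
  have hsq : (fun s y => ρ s y * u s y ^ 2) = fun s y => ρ s y * u s y * u s y := by
    funext s y
    ring
  rw [hsq] at mom
  linarith [partialFst_mul_add_partialSnd_mul_mul hρ hu hu mass]

theorem mul_materialDeriv_partialSnd_comp (hρ : ContDiff ℝ 2 (uncurry ρ))
    (hu : ContDiff ℝ 2 (uncurry u)) (hρpos : ∀ t x, 0 < ρ t x) (hμ : ContDiffOn ℝ 1 μ (Ioi 0))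
    (hP : ∀ r ∈ Ioi (0 : ℝ), HasDerivAt P (μ r / r ^ 2) r)
    (mass : ∀ y, partialFst ρ t y + partialSnd (fun s y => ρ s y * u s y) t y = 0) :
    ρ t x * materialDeriv u (partialSnd fun s y => P (ρ s y)) t x
      = -partialSnd (fun s y => μ (ρ s y) * partialSnd u s y) t x := by
  have hρ1 : Differentiable ℝ (uncurry ρ) := hρ.differentiable (by norm_num)
  have hu1 : Differentiable ℝ (uncurry u) := hu.differentiable (by norm_num)
  have hux : Differentiable ℝ (uncurry (partialSnd u)) :=
    (hu.uncurry_partialSnd (m := 1) (by norm_num)).differentiable one_ne_zero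
  have hPρ : ∀ y, HasDerivAt P (μ (ρ t y) / ρ t y ^ 2) (ρ t y) := fun y => hP _ (hρpos t y)
  have hφx :
      partialSnd (fun s y => P (ρ s y)) t x = μ (ρ t x) / ρ t x ^ 2 * partialSnd ρ t x :=
    ((hPρ x).comp x (hρ1 _).hasDerivAt_partialSnd).deriv
  have hDφ : (fun y => materialDeriv u (fun s y => P (ρ s y)) t y)
      = fun y => -(μ (ρ t y) * partialSnd u t y / ρ t y) := by
    funext y
    rw [materialDeriv_comp (hPρ y) (hρ1 _), materialDeriv_of_mass (hρ1 _) (hu1 _) (mass y)]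
    field_simp [(hρpos t y).ne']
  have hμρ : HasDerivAt (fun y => μ (ρ t y)) (deriv μ (ρ t x) * partialSnd ρ t x) x :=
    (((hμ.differentiableOn one_ne_zero).differentiableAt
      (isOpen_Ioi.mem_nhds (hρpos t x))).hasDerivAt).comp x (hρ1 _).hasDerivAt_partialSnd
  have hσ : HasDerivAt (fun y => μ (ρ t y) * partialSnd u t y)
      (partialSnd (fun s y => μ (ρ s y) * partialSnd u s y) t x) x :=
    (hμρ.fun_mul (hux _).hasDerivAt_partialSnd).differentiableAt.hasDerivAt
  have hDφx : partialSnd (materialDeriv u fun s y => P (ρ s y)) t x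
      = -((partialSnd (fun s y => μ (ρ s y) * partialSnd u s y) t x * ρ t x
        - μ (ρ t x) * partialSnd u t x * partialSnd ρ t x) / ρ t x ^ 2) := by
    show deriv (fun y => materialDeriv u (fun s y => P (ρ s y)) t y) x = _
    rw [hDφ]
    exact ((hσ.div (hρ1 _).hasDerivAt_partialSnd (hρpos t x).ne').neg).deriv
  have hcomm := partialSnd_materialDeriv (contDiff_uncurry_comp hρ hρpos hμ hP) (hu1 (t, x))
  rw [eq_sub_of_add_eq hcomm.symm, hDφx, hφx]
  field_simp [(hρpos t x).ne']
  ring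

end Offset

theorem stmt6_general
    (ρ u : ℝ → ℝ → ℝ) (μ P : ℝ → ℝ) (c : ℝ) (hc : 0 < c)
    (hρ : ContDiff ℝ 2 (fun q : ℝ × ℝ => ρ q.1 q.2))
    (hu : ContDiff ℝ 2 (fun q : ℝ × ℝ => u q.1 q.2))
    (hρpos : ∀ t x, c ≤ ρ t x)
    (hμ : ContDiffOn ℝ 1 μ (Ioi 0))
    (hPdiff : ∀ r ∈ Ioi (0:ℝ), DifferentiableAt ℝ P r)
    (hP' : ∀ r ∈ Ioi (0:ℝ), deriv P r = μ r / r^2)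
    (mass : ∀ t x, deriv (fun s => ρ s x) t + deriv (fun y => ρ t y * u t y) x = 0)
    (mom : ∀ t x, deriv (fun s => ρ s x * u s x) t
        + deriv (fun y => ρ t y * (u t y)^2) x
        - deriv (fun y => μ (ρ t y) * deriv (fun z => u t z) y) x = 0) :
    ∀ t x, deriv (fun s => ρ s x * (u s x + deriv (fun y => P (ρ s y)) x)) t
      + deriv (fun y => ρ t y * (u t y + deriv (fun z => P (ρ t z)) y) * u t y) x = 0 := by
  intro t x
  have hρ1 : Differentiable ℝ (uncurry ρ) := hρ.differentiable (by norm_num)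
  have hu1 : Differentiable ℝ (uncurry u) := hu.differentiable (by norm_num)
  have hρpos' : ∀ t x, 0 < ρ t x := fun t x => hc.trans_le (hρpos t x)
  have hP : ∀ r ∈ Ioi (0 : ℝ), HasDerivAt P (μ r / r ^ 2) r := fun r hr =>
    hP' r hr ▸ (hPdiff r hr).hasDerivAt
  have hφx : Differentiable ℝ (uncurry (partialSnd fun s y => P (ρ s y))) :=
    ((contDiff_uncurry_comp hρ hρpos' hμ hP).uncurry_partialSnd (m := 1)
      (by norm_num)).differentiable one_ne_zero
  refine (partialFst_mul_add_partialSnd_mul_mul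
    (f := fun s y => u s y + partialSnd (fun s y => P (ρ s y)) s y)
    (hρ1 _) (hu1 _) ((hu1 _).add (hφx _)) (mass t x)).trans ?_
  rw [materialDeriv_add (hu1 _) (hφx _), mul_add,
    mul_materialDeriv_of_momentum (σ := fun s y => μ (ρ s y) * partialSnd u s y)
      (hρ1 _) (hu1 _) (mass t x) (mom t x),
    mul_materialDeriv_partialSnd_comp hρ hu hρpos' hμ hP (mass t), add_neg_cancel]

theorem stmt6 (T : ℝ) (hT : 0 < T)
    (ρ u : ℝ → ℝ → ℝ) (μ P : ℝ → ℝ) (c : ℝ) (hc : 0 < c)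
    (hρ : ContDiff ℝ 2 (fun q : ℝ × ℝ => ρ q.1 q.2))
    (hu : ContDiff ℝ 2 (fun q : ℝ × ℝ => u q.1 q.2))
    (hρpos : ∀ t x, c ≤ ρ t x)
    (hμ : ContDiffOn ℝ 1 μ (Ioi 0))
    (hPdiff : ∀ r ∈ Ioi (0:ℝ), DifferentiableAt ℝ P r)
    (hP' : ∀ r ∈ Ioi (0:ℝ), deriv P r = μ r / r^2)
    (mass : ∀ t x, deriv (fun s => ρ s x) t + deriv (fun y => ρ t y * u t y) x = 0)
    (mom : ∀ t x, deriv (fun s => ρ s x * u s x) t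
        + deriv (fun y => ρ t y * (u t y)^2) x
        - deriv (fun y => μ (ρ t y) * deriv (fun z => u t z) y) x = 0) :
    ∀ t x, deriv (fun s => ρ s x * (u s x + deriv (fun y => P (ρ s y)) x)) t
      + deriv (fun y => ρ t y * (u t y + deriv (fun z => P (ρ t z)) y) * u t y) x = 0 :=
  stmt6_general ρ u μ P c hc hρ hu hρpos hμ hPdiff hP' mass mom
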